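/- arXiv:math-ph/9911046 — 3 statements merged into one kernel-verified Lean document; each statement's English description precedes it below -/
import Mathlib

section
/- Let R > 0, s > 3 and c > 0. Let K : ℝ³ × ℝ³ → ℂ be measurable with ‖K(x,y)‖ ≤ c/‖x−y‖ for all x ≠ y, and let f : ℝ³ → ℂ be measurable with ‖f(y)‖ ≤ c·(1+‖y‖²)^{−s/2} for all y. Then there exists a constant C > 0 such that for every x ∈ ℝ³, ‖∫_{{y : ‖y‖ > R}} K(x,y) f(y) dy‖ ≤ C/(1+‖x‖). (Lemma 4.1 of the paper, stated for a kernel K that may be either the Green function g or its gradient ∇_x g, both of which satisfy the hypothesis.) -/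
/-!
Since `‖K(x,y) f(y)‖ ≤ c² 2^{s/2} ‖x - y‖⁻¹ (1 + ‖y‖)^{-s}`, it suffices to bound the potential
`∫ ‖x - y‖⁻¹ (1 + ‖y‖)^{-s} dy` in dimension `d ≥ 2` with `s > d`. Split at distance
`r = (1 + ‖x‖)/2` from `x`. Near `x` the weight is at most `r^{-s}`, and by scaling
`∫_{‖z‖<r} ‖z‖⁻¹ dz = r^{d-1} ∫_{‖z‖<1} ‖z‖⁻¹ dz`, which gives `O(r^{d-s-1}) = O(1/r)`.
Far from `x` the kernel is at most `1/r` and the weight is integrable.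
-/

open MeasureTheory

noncomputable abbrev E3 : Type := EuclideanSpace ℝ (Fin 3)

open Metric Set Module

theorem one_add_norm_sub_rpow_neg_le_of_norm_lt {E : Type*} [SeminormedAddCommGroup E] {s : ℝ}
    (hs : 0 ≤ s) {x z : E} (hz : ‖z‖ < (1 + ‖x‖) / 2) :
    (1 + ‖x - z‖) ^ (-s) ≤ ((1 + ‖x‖) / 2) ^ (-s) := by
  have := norm_sub_norm_le x z
  exact Real.rpow_le_rpow_of_nonpos (by positivity) (by linarith) (by linarith)

section Potential

variable {E : Type*} [NormedAddCommGroup E] [NormedSpace ℝ E] [FiniteDimensional ℝ E]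
  [MeasurableSpace E] [BorelSpace E] {μ : Measure E} [μ.IsAddHaarMeasure]

theorem integrableOn_inv_norm_ball (hd : 2 ≤ finrank ℝ E) (r : ℝ) :
    IntegrableOn (fun z : E => ‖z‖⁻¹) (ball 0 r) μ :=
  integrableOn_ball_of_norm_le_rpow (C := 1) (α := 1) (by omega) (by exact_mod_cast hd)
    (ae_of_all _ fun z => by simp [Real.rpow_neg_one]) (by fun_prop)

theorem setIntegral_inv_norm_ball {r : ℝ} (hr : 0 < r) :
    ∫ z in ball (0 : E) r, ‖z‖⁻¹ ∂μ =
      r ^ finrank ℝ E / r * ∫ z in ball (0 : E) 1, ‖z‖⁻¹ ∂μ := by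
  have h := μ.setIntegral_comp_smul_of_pos (fun z : E => ‖z‖⁻¹) (ball 0 1) hr
  simp only [smul_unitBall hr.ne', Real.norm_of_nonneg hr.le, norm_smul, mul_inv,
    integral_const_mul, smul_eq_mul] at h
  field_simp at h ⊢
  linarith

variable {s : ℝ}

theorem integrable_inv_norm_mul_one_add_norm_sub_rpow_neg (hd : 2 ≤ finrank ℝ E)
    (hs : finrank ℝ E < s) (x : E) :
    Integrable (fun z => ‖z‖⁻¹ * (1 + ‖x - z‖) ^ (-s)) μ := by
  have hv : Integrable (fun z => (1 + ‖x - z‖) ^ (-s)) μ :=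
    (integrable_one_add_norm hs).comp_sub_left x
  have hs0 : 0 ≤ s := by linarith [(finrank ℝ E).cast_nonneg (α := ℝ)]
  have hv_le_one (z : E) : (1 + ‖x - z‖) ^ (-s) ≤ 1 :=
    Real.rpow_le_one_of_one_le_of_nonpos (by simp) (by linarith)
  refine (((integrableOn_inv_norm_ball hd 1).integrable_indicator measurableSet_ball).add hv).mono'
    (by fun_prop) (ae_of_all _ fun z => ?_)
  have hv0 : 0 ≤ (1 + ‖x - z‖) ^ (-s) := by positivity
  rw [Real.norm_of_nonneg (by positivity), Pi.add_apply]
  by_cases hz : z ∈ ball (0 : E) 1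
  · rw [indicator_of_mem hz]
    nlinarith [hv_le_one z, inv_nonneg.2 (norm_nonneg z)]
  · rw [indicator_of_notMem hz]
    have : ‖z‖⁻¹ ≤ 1 := inv_le_one_of_one_le₀ (by simpa using hz)
    nlinarith

theorem setIntegral_ball_inv_norm_mul_one_add_norm_sub_rpow_neg_le (hd : 2 ≤ finrank ℝ E)
    (hs : finrank ℝ E < s) (x : E) :
    ∫ z in ball 0 ((1 + ‖x‖) / 2), ‖z‖⁻¹ * (1 + ‖x - z‖) ^ (-s) ∂μ ≤
      (1 / 2) ^ ((finrank ℝ E : ℝ) - s) * (∫ z in ball (0 : E) 1, ‖z‖⁻¹ ∂μ) /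
        ((1 + ‖x‖) / 2) := by
  set r := (1 + ‖x‖) / 2
  have hr : 1 / 2 ≤ r := by simp only [r]; linarith [norm_nonneg x]
  have hr0 : 0 < r := by linarith
  have hs0 : 0 ≤ s := by linarith [(finrank ℝ E).cast_nonneg (α := ℝ)]
  have hM : 0 ≤ ∫ z in ball (0 : E) 1, ‖z‖⁻¹ ∂μ :=
    setIntegral_nonneg measurableSet_ball fun z _ => by positivity
  calc ∫ z in ball 0 r, ‖z‖⁻¹ * (1 + ‖x - z‖) ^ (-s) ∂μ
      ≤ ∫ z in ball 0 r, r ^ (-s) * ‖z‖⁻¹ ∂μ := by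
        refine setIntegral_mono_on
          (integrable_inv_norm_mul_one_add_norm_sub_rpow_neg hd hs x).integrableOn
          ((integrableOn_inv_norm_ball hd r).const_mul _) measurableSet_ball fun z hz => ?_
        rw [mul_comm]
        exact mul_le_mul_of_nonneg_right
          (one_add_norm_sub_rpow_neg_le_of_norm_lt hs0 (mem_ball_zero_iff.1 hz)) (by positivity)
    _ = r ^ ((finrank ℝ E : ℝ) - s) * (∫ z in ball (0 : E) 1, ‖z‖⁻¹ ∂μ) / r := by
        rw [integral_const_mul, setIntegral_inv_norm_ball hr0, ← Real.rpow_natCast,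
          sub_eq_neg_add, Real.rpow_add hr0]
        ring
    _ ≤ _ := by
        gcongr ?_ * _ / _
        exact Real.rpow_le_rpow_of_nonpos (by norm_num) hr (by linarith)

theorem setIntegral_compl_ball_inv_norm_mul_one_add_norm_sub_rpow_neg_le
    (hd : 2 ≤ finrank ℝ E) (hs : finrank ℝ E < s) (x : E) {r : ℝ} (hr : 0 < r) :
    ∫ z in (ball 0 r)ᶜ, ‖z‖⁻¹ * (1 + ‖x - z‖) ^ (-s) ∂μ ≤ (∫ y, (1 + ‖y‖) ^ (-s) ∂μ) / r := by
  have hv : Integrable (fun z => (1 + ‖x - z‖) ^ (-s)) μ :=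
    (integrable_one_add_norm hs).comp_sub_left x
  calc ∫ z in (ball 0 r)ᶜ, ‖z‖⁻¹ * (1 + ‖x - z‖) ^ (-s) ∂μ
      ≤ ∫ z in (ball 0 r)ᶜ, r⁻¹ * (1 + ‖x - z‖) ^ (-s) ∂μ := by
        refine setIntegral_mono_on
          (integrable_inv_norm_mul_one_add_norm_sub_rpow_neg hd hs x).integrableOn
          (hv.const_mul _).integrableOn measurableSet_ball.compl fun z hz => ?_
        have : r ≤ ‖z‖ := by simpa using hz
        gcongr
    _ ≤ r⁻¹ * ∫ z, (1 + ‖x - z‖) ^ (-s) ∂μ := by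
        rw [integral_const_mul]
        exact mul_le_mul_of_nonneg_left
          (setIntegral_le_integral hv (ae_of_all _ fun z => by positivity)) (by positivity)
    _ = (∫ y, (1 + ‖y‖) ^ (-s) ∂μ) / r := by
        rw [integral_sub_left_eq_self (fun y => (1 + ‖y‖) ^ (-s)) μ x, inv_mul_eq_div]

theorem integrable_inv_norm_sub_mul_one_add_norm_rpow_neg (hd : 2 ≤ finrank ℝ E)
    (hs : finrank ℝ E < s) (x : E) :
    Integrable (fun y => ‖x - y‖⁻¹ * (1 + ‖y‖) ^ (-s)) μ := by
  simpa using (integrable_inv_norm_mul_one_add_norm_sub_rpow_neg hd hs x (μ := μ)).comp_sub_left x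

theorem exists_integral_inv_norm_sub_mul_one_add_norm_rpow_neg_le (hd : 2 ≤ finrank ℝ E)
    (hs : finrank ℝ E < s) :
    ∃ C, 0 < C ∧ ∀ x : E, ∫ y, ‖x - y‖⁻¹ * (1 + ‖y‖) ^ (-s) ∂μ ≤ C / (1 + ‖x‖) := by
  set M := ∫ z in ball (0 : E) 1, ‖z‖⁻¹ ∂μ
  set J := ∫ y, (1 + ‖y‖) ^ (-s) ∂μ
  have hM : 0 ≤ M := setIntegral_nonneg measurableSet_ball fun z _ => by positivity
  have hJ : 0 < J := integral_pos_of_integrable_nonneg_nonzero (x := 0)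
    ((continuous_const.add continuous_norm).rpow_const fun y => .inl (by positivity : 1 + ‖y‖ ≠ 0))
    (integrable_one_add_norm hs) (fun y => by positivity) (by simp)
  refine ⟨2 * ((1 / 2) ^ ((finrank ℝ E : ℝ) - s) * M + J), by positivity, fun x => ?_⟩
  set r := (1 + ‖x‖) / 2
  have hr : 0 < r := by positivity
  have hint := integrable_inv_norm_mul_one_add_norm_sub_rpow_neg hd hs x (μ := μ)
  calc ∫ y, ‖x - y‖⁻¹ * (1 + ‖y‖) ^ (-s) ∂μ
      = ∫ z, ‖z‖⁻¹ * (1 + ‖x - z‖) ^ (-s) ∂μ := by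
        simpa using integral_sub_left_eq_self (fun z => ‖z‖⁻¹ * (1 + ‖x - z‖) ^ (-s)) μ x
    _ = (∫ z in ball 0 r, ‖z‖⁻¹ * (1 + ‖x - z‖) ^ (-s) ∂μ) +
          ∫ z in (ball 0 r)ᶜ, ‖z‖⁻¹ * (1 + ‖x - z‖) ^ (-s) ∂μ :=
        (integral_add_compl measurableSet_ball hint).symm
    _ ≤ (1 / 2) ^ ((finrank ℝ E : ℝ) - s) * M / r + J / r :=
        add_le_add (setIntegral_ball_inv_norm_mul_one_add_norm_sub_rpow_neg_le hd hs x)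
          (setIntegral_compl_ball_inv_norm_mul_one_add_norm_sub_rpow_neg_le hd hs x hr)
    _ = 2 * ((1 / 2) ^ ((finrank ℝ E : ℝ) - s) * M + J) / (1 + ‖x‖) := by
        simp only [r]
        field_simp

end Potential

theorem volume_potential_decay_general
    (R s c : ℝ) (hs : 3 < s) (hc : 0 < c)
    (K : E3 × E3 → ℂ)
    (hK : ∀ x y : E3, x ≠ y → ‖K (x, y)‖ ≤ c / ‖x - y‖)
    (f : E3 → ℂ)
    (hf : ∀ y : E3, ‖f y‖ ≤ c * (1 + ‖y‖ ^ 2) ^ (-s / 2)) :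
    ∃ C : ℝ, 0 < C ∧ ∀ x : E3,
      ‖∫ y in {y : E3 | R < ‖y‖}, K (x, y) * f y‖ ≤ C / (1 + ‖x‖) := by
  have hd : 2 ≤ finrank ℝ E3 := by simp
  have hs' : (finrank ℝ E3 : ℝ) < s := by simpa using hs
  obtain ⟨C, hC, hpot⟩ :=
    exists_integral_inv_norm_sub_mul_one_add_norm_rpow_neg_le (μ := volume) hd hs'
  set A := c * (c * 2 ^ (s / 2))
  refine ⟨A * C, by positivity, fun x => ?_⟩
  have hint : Integrable (fun y => A * (‖x - y‖⁻¹ * (1 + ‖y‖) ^ (-s))) :=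
    (integrable_inv_norm_sub_mul_one_add_norm_rpow_neg hd hs' x).const_mul A
  have hbound : ∀ᵐ y, ‖K (x, y) * f y‖ ≤ A * (‖x - y‖⁻¹ * (1 + ‖y‖) ^ (-s)) := by
    filter_upwards [volume.ae_ne x] with y hy
    calc ‖K (x, y) * f y‖ = ‖K (x, y)‖ * ‖f y‖ := norm_mul _ _
      _ ≤ (c * ‖x - y‖⁻¹) * (c * (2 ^ (s / 2) * (1 + ‖y‖) ^ (-s))) := by
        gcongr
        · exact (hK x y hy.symm).trans_eq (div_eq_mul_inv _ _)
        · exact (hf y).trans (by gcongr; exact rpow_neg_one_add_norm_sq_le y (by linarith))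
      _ = A * (‖x - y‖⁻¹ * (1 + ‖y‖) ^ (-s)) := by ring
  calc ‖∫ y in {y : E3 | R < ‖y‖}, K (x, y) * f y‖
      ≤ ∫ y in {y : E3 | R < ‖y‖}, A * (‖x - y‖⁻¹ * (1 + ‖y‖) ^ (-s)) :=
        norm_integral_le_of_norm_le hint.integrableOn (ae_restrict_of_ae hbound)
    _ ≤ ∫ y, A * (‖x - y‖⁻¹ * (1 + ‖y‖) ^ (-s)) :=
        setIntegral_le_integral hint (ae_of_all _ fun y => by positivity)
    _ ≤ A * (C / (1 + ‖x‖)) := by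
        rw [integral_const_mul]
        gcongr
        exact hpot x
    _ = A * C / (1 + ‖x‖) := mul_div_assoc' _ _ _

/-- Lemma 4.1: for a kernel `K` bounded by `c/‖x-y‖` and a density `f` decaying like
`(1+‖y‖²)^{-s/2}` with `s > 3`, the potential `∫_{‖y‖>R} K(x,y) f(y) dy` is `O(1/(1+‖x‖))`. -/
theorem volume_potential_decay
    (R s c : ℝ) (hR : 0 < R) (hs : 3 < s) (hc : 0 < c)
    (K : E3 × E3 → ℂ) (hKmeas : Measurable K)
    (hK : ∀ x y : E3, x ≠ y → ‖K (x, y)‖ ≤ c / ‖x - y‖)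
    (f : E3 → ℂ) (hfmeas : Measurable f)
    (hf : ∀ y : E3, ‖f y‖ ≤ c * (1 + ‖y‖ ^ 2) ^ (-s / 2)) :
    ∃ C : ℝ, 0 < C ∧ ∀ x : E3,
      ‖∫ y in {y : E3 | R < ‖y‖}, K (x, y) * f y‖ ≤ C / (1 + ‖x‖) :=
  volume_potential_decay_general R s c hs hc K hK f hf
end

section
/- Let R > 0, s > 3 and c > 0. Let K : ℝ³ × ℝ³ → ℂ be measurable with ‖K(x,y)‖ ≤ c/‖x−y‖ for all x ≠ y, let f : ℝ³ → ℂ be measurable with ‖f(y)‖ ≤ c·(1+‖y‖²)^{−s/2} for all y, and let ψ : ℝ³ → ℂ be measurable with ‖ψ‖_{0,−s} < ∞. Then there exists a constant C > 0 (depending only on c, s, R) such that for every x ∈ ℝ³, ‖∫_{{y : ‖y‖ > R}} K(x,y) f(y) ψ(y) dy‖ ≤ C·‖ψ‖_{0,−s}/(1+‖x‖). (Lemma 4.2 of the paper.) -/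
open MeasureTheory

/-- The weighted norm `‖ψ‖_{0,-s} = (∫ (1+‖y‖²)^{-s/2} ‖ψ(y)‖² dy)^{1/2}`. -/
noncomputable def weightedNorm (s : ℝ) (ψ : E3 → ℂ) : ℝ :=
  (∫ y : E3, (1 + ‖y‖ ^ 2) ^ (-s / 2) * ‖ψ y‖ ^ 2) ^ (1 / 2 : ℝ)

/-!
By Cauchy–Schwarz for the measure `(1 + ‖y‖²)^{-s/2} dy`, the potential is at most
`c² ‖ψ‖_{0,-s}` times `(∫ ‖x - y‖⁻² (1 + ‖y‖²)^{-s/2} dy)^{1/2}`, so it suffices to bound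
`(1 + ‖x‖)²` times this integral uniformly in `x`. Since
`(1 + ‖x‖)² ≤ 2 (1 + ‖y‖)² + 2 ‖x - y‖²`, this reduces to a uniform bound on
`∫ ‖x - y‖⁻² (1 + ‖y‖²)^{-(s-2)/2} dy`. Near the diagonal `‖z‖⁻²` is locally integrable in
dimension `d > 2`; away from it Young's inequality `ab ≤ aᵖ + b^q`, with `2p > d` and
`(s - 2) q > d` (possible exactly because `s > d`), dominates the integrand by an integrable
function of `x - y` plus an integrable function of `y`, whose integrals do not depend on `x`.
-/

open Metric Module
open scoped ENNReal

lemma Real.mul_le_rpow_add_rpow {a b p q : ℝ} (ha : 0 ≤ a) (hb : 0 ≤ b)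
    (hpq : p.HolderConjugate q) : a * b ≤ a ^ p + b ^ q :=
  (Real.young_inequality_of_nonneg ha hb hpq).trans <| add_le_add
    (div_le_self (Real.rpow_nonneg ha p) hpq.lt.le)
    (div_le_self (Real.rpow_nonneg hb q) hpq.symm.lt.le)

lemma Real.exists_holderConjugate_lt {d s : ℝ} (hd : 2 < d) (hs : d < s) :
    ∃ p q : ℝ, p.HolderConjugate q ∧ d < 2 * p ∧ d < (s - 2) * q := by
  have hd₀ : 0 < d := by linarith
  obtain ⟨a, ha_lower, ha_upper⟩ : ∃ a, max 0 ((d - s + 2) / d) < a ∧ a < 2 / d :=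
    exists_between <| max_lt (by positivity) (by gcongr; linarith)
  rw [max_lt_iff] at ha_lower
  have ha₁ : a < 1 := ha_upper.trans ((div_lt_one hd₀).2 hd)
  refine ⟨a⁻¹, (1 - a)⁻¹, .inv_inv ha_lower.1 (by linarith) (by ring), ?_, ?_⟩
  · rw [← div_eq_mul_inv, lt_div_iff₀ ha_lower.1]
    rwa [lt_div_iff₀ hd₀, mul_comm] at ha_upper
  · rw [← div_eq_mul_inv, lt_div_iff₀ (by linarith)]
    rw [div_lt_iff₀ hd₀] at ha_lower
    linarith [ha_lower.2]

theorem ENNReal.lintegral_mul_mul_le_weighted_L2 {α : Type*} [MeasurableSpace α]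
    {μ : Measure α} {w f g : α → ℝ≥0∞} (hw : AEMeasurable w μ) (hf : AEMeasurable f μ)
    (hg : AEMeasurable g μ) :
    ∫⁻ a, w a * (f a * g a) ∂μ ≤
      (∫⁻ a, w a * f a ^ 2 ∂μ) ^ (1 / 2 : ℝ) * (∫⁻ a, w a * g a ^ 2 ∂μ) ^ (1 / 2 : ℝ) := by
  have hac := withDensity_absolutelyContinuous μ w
  have hCS := ENNReal.lintegral_mul_le_Lp_mul_Lq (μ.withDensity w) .two_two
    (hf.mono_ac hac) (hg.mono_ac hac)
  rw [lintegral_withDensity_eq_lintegral_mul₀ hw (hf.mul hg),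
    lintegral_withDensity_eq_lintegral_mul₀ hw (hf.pow_const _),
    lintegral_withDensity_eq_lintegral_mul₀ hw (hg.pow_const _)] at hCS
  simpa only [Pi.mul_apply, ENNReal.rpow_two] using hCS

noncomputable def bracketWeight {E : Type*} [Norm E] (s : ℝ) (y : E) : ℝ :=
  (1 + ‖y‖ ^ 2) ^ (-s / 2)

section bracketWeight

variable {E : Type*} [NormedAddCommGroup E] {s : ℝ} (y : E)

lemma bracketWeight_nonneg : 0 ≤ bracketWeight s y :=
  Real.rpow_nonneg (by positivity : (0 : ℝ) < 1 + ‖y‖ ^ 2).le _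

lemma bracketWeight_le_one (hs : 0 ≤ s) : bracketWeight s y ≤ 1 :=
  Real.rpow_le_one_of_one_le_of_nonpos (by simp) (by linarith)

lemma bracketWeight_rpow (q : ℝ) : bracketWeight s y ^ q = bracketWeight (s * q) y := by
  rw [bracketWeight, ← Real.rpow_mul (by positivity : (0 : ℝ) < 1 + ‖y‖ ^ 2).le, bracketWeight]
  ring_nf

lemma sq_one_add_norm_mul_bracketWeight_le :
    (1 + ‖y‖) ^ 2 * bracketWeight s y ≤ 2 * bracketWeight (s - 2) y := by
  have h : (1 + ‖y‖ ^ 2) * bracketWeight s y = bracketWeight (s - 2) y := by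
    rw [bracketWeight, bracketWeight, show -(s - 2) / 2 = 1 + -s / 2 by ring,
      Real.rpow_add (by positivity : (0 : ℝ) < 1 + ‖y‖ ^ 2), Real.rpow_one]
  rw [← h, ← mul_assoc]
  gcongr
  · exact bracketWeight_nonneg y
  · nlinarith [sq_nonneg (1 - ‖y‖)]

lemma continuous_bracketWeight : Continuous (bracketWeight s : E → ℝ) :=
  (continuous_const.add (continuous_norm.pow 2)).rpow_const fun y =>
    Or.inl (by positivity : (0 : ℝ) < 1 + ‖y‖ ^ 2).ne'

end bracketWeight

section Kernel

variable {E : Type*} [NormedAddCommGroup E]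

noncomputable def invSqMajorant (p : ℝ) (z : E) : ℝ :=
  (ball (0 : E) 1).indicator (fun z => (‖z‖ ^ 2)⁻¹) z + 4 ^ p * (1 + ‖z‖) ^ (-(2 * p))

lemma inv_norm_sq_mul_le_invSqMajorant_add {p q : ℝ} (hpq : p.HolderConjugate q) (z : E)
    {v : ℝ} (hv₀ : 0 ≤ v) (hv₁ : v ≤ 1) :
    (‖z‖ ^ 2)⁻¹ * v ≤ invSqMajorant p z + v ^ q := by
  have htail : 0 ≤ (4 : ℝ) ^ p * (1 + ‖z‖) ^ (-(2 * p)) := by positivity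
  have hvq : 0 ≤ v ^ q := Real.rpow_nonneg hv₀ q
  by_cases hz : ‖z‖ < 1
  · rw [invSqMajorant, Set.indicator_of_mem (mem_ball_zero_iff.2 hz)]
    have := mul_le_of_le_one_right (by positivity : 0 ≤ (‖z‖ ^ 2)⁻¹) hv₁
    linarith
  · rw [invSqMajorant, Set.indicator_of_notMem (by simpa using hz), zero_add]
    have hz₀ : 0 < ‖z‖ := by linarith [not_lt.1 hz]
    have hdecay : (‖z‖ ^ 2)⁻¹ ≤ 4 / (1 + ‖z‖) ^ 2 := by
      rw [inv_eq_one_div, div_le_div_iff₀ (by positivity) (by positivity)]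
      nlinarith [not_lt.1 hz]
    have hpow : (4 / (1 + ‖z‖) ^ 2) ^ p = 4 ^ p * (1 + ‖z‖) ^ (-(2 * p)) := by
      rw [Real.div_rpow (by norm_num) (by positivity), div_eq_mul_inv, Real.rpow_neg (by positivity),
        ← Real.rpow_natCast, ← Real.rpow_mul (by positivity)]
      norm_num
    calc (‖z‖ ^ 2)⁻¹ * v ≤ 4 / (1 + ‖z‖) ^ 2 * v := mul_le_mul_of_nonneg_right hdecay hv₀
      _ ≤ (4 / (1 + ‖z‖) ^ 2) ^ p + v ^ q := Real.mul_le_rpow_add_rpow (by positivity) hv₀ hpq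
      _ = _ := by rw [hpow]

lemma sq_one_add_norm_mul_inv_norm_sub_sq_mul_le {s p q : ℝ} (hs : 2 ≤ s)
    (hpq : p.HolderConjugate q) (x y : E) :
    (1 + ‖x‖) ^ 2 * ((‖x - y‖ ^ 2)⁻¹ * bracketWeight s y) ≤
      4 * invSqMajorant p (x - y) + 4 * bracketWeight ((s - 2) * q) y
        + 2 * bracketWeight s y := by
  have hw := bracketWeight_nonneg (s := s) y
  have hsplit : (1 + ‖x‖) ^ 2 ≤ 2 * (1 + ‖y‖) ^ 2 + 2 * ‖x - y‖ ^ 2 := by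
    nlinarith [norm_le_norm_add_norm_sub' x y, sq_nonneg (1 + ‖y‖ - ‖x - y‖), norm_nonneg x]
  have hcancel : ‖x - y‖ ^ 2 * (‖x - y‖ ^ 2)⁻¹ ≤ 1 := mul_inv_le_one
  have hweight := sq_one_add_norm_mul_bracketWeight_le (s := s) y
  have hyoung := inv_norm_sq_mul_le_invSqMajorant_add hpq (x - y)
    (bracketWeight_nonneg (s := s - 2) y) (bracketWeight_le_one y (by linarith))
  rw [bracketWeight_rpow] at hyoung
  calc (1 + ‖x‖) ^ 2 * ((‖x - y‖ ^ 2)⁻¹ * bracketWeight s y)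
      ≤ (2 * (1 + ‖y‖) ^ 2 + 2 * ‖x - y‖ ^ 2) * ((‖x - y‖ ^ 2)⁻¹ * bracketWeight s y) := by
        gcongr
    _ = 2 * ((1 + ‖y‖) ^ 2 * bracketWeight s y) * (‖x - y‖ ^ 2)⁻¹
          + 2 * (‖x - y‖ ^ 2 * (‖x - y‖ ^ 2)⁻¹) * bracketWeight s y := by ring
    _ ≤ 2 * (2 * bracketWeight (s - 2) y) * (‖x - y‖ ^ 2)⁻¹ + 2 * 1 * bracketWeight s y := by
        gcongr
    _ = 4 * ((‖x - y‖ ^ 2)⁻¹ * bracketWeight (s - 2) y) + 2 * bracketWeight s y := by ring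
    _ ≤ _ := by linarith

variable [NormedSpace ℝ E] [FiniteDimensional ℝ E] [MeasurableSpace E] [BorelSpace E]
  (μ : Measure E) [μ.IsAddHaarMeasure]

lemma integrable_bracketWeight {s : ℝ} (hs : finrank ℝ E < s) :
    Integrable (bracketWeight s : E → ℝ) μ :=
  integrable_rpow_neg_one_add_norm_sq hs

lemma integrable_invSqMajorant {p : ℝ} (hd : 2 < finrank ℝ E) (hp : finrank ℝ E < 2 * p) :
    Integrable (invSqMajorant p : E → ℝ) μ := by
  have hsing : IntegrableOn (fun z : E => (‖z‖ ^ 2)⁻¹) (ball 0 1) μ := by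
    refine integrableOn_ball_of_norm_le_rpow (C := 1) (α := 2) (by omega) (by exact_mod_cast hd)
      (ae_of_all _ fun z => ?_) (by fun_prop)
    rw [one_mul, Real.rpow_neg (norm_nonneg z), Real.norm_of_nonneg (by positivity)]
    norm_cast
  exact (hsing.integrable_indicator measurableSet_ball).add
    ((integrable_one_add_norm hp).const_mul _)

theorem exists_lintegral_sq_one_add_norm_mul_inv_norm_sub_sq_le {s : ℝ} (hd : 2 < finrank ℝ E)
    (hs : finrank ℝ E < s) :
    ∃ A : ℝ, ∀ x : E, ∫⁻ y, ENNReal.ofReal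
      ((1 + ‖x‖) ^ 2 * ((‖x - y‖ ^ 2)⁻¹ * bracketWeight s y)) ∂μ ≤ ENNReal.ofReal A := by
  have hd' : (2 : ℝ) < finrank ℝ E := by exact_mod_cast hd
  obtain ⟨p, q, hpq, hp, hq⟩ := Real.exists_holderConjugate_lt hd' hs
  let B : E → ℝ := fun y => 4 * bracketWeight ((s - 2) * q) y + 2 * bracketWeight s y
  have hB : Integrable B μ :=
    ((integrable_bracketWeight μ hq).const_mul 4).add ((integrable_bracketWeight μ hs).const_mul 2)
  have hmaj := (integrable_invSqMajorant μ hd hp).const_mul 4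
  refine ⟨∫ z, 4 * invSqMajorant p z ∂μ + ∫ y, B y ∂μ, fun x => ?_⟩
  have hmajor : ∀ y, (1 + ‖x‖) ^ 2 * ((‖x - y‖ ^ 2)⁻¹ * bracketWeight s y)
      ≤ 4 * invSqMajorant p (x - y) + B y := fun y => by
    simpa only [B, add_assoc] using sq_one_add_norm_mul_inv_norm_sub_sq_mul_le (by linarith) hpq x y
  have hM : Integrable (fun y => 4 * invSqMajorant p (x - y) + B y) μ :=
    (hmaj.comp_sub_left x).add hB
  rw [← integral_sub_left_eq_self _ μ x, ← integral_add (hmaj.comp_sub_left x) hB,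
    ofReal_integral_eq_lintegral_ofReal hM (ae_of_all _ fun y =>
      le_trans (by have := bracketWeight_nonneg (s := s) y; positivity) (hmajor y))]
  exact lintegral_mono fun y => ENNReal.ofReal_le_ofReal (hmajor y)

theorem exists_lintegral_inv_norm_sub_mul_bracketWeight_mul_le {s : ℝ} (hd : 2 < finrank ℝ E)
    (hs : finrank ℝ E < s) :
    ∃ C > 0, ∀ g : E → ℝ≥0∞, AEMeasurable g μ → ∀ x : E,
      ∫⁻ y, ENNReal.ofReal (‖x - y‖⁻¹ * bracketWeight s y) * g y ∂μ ≤
        ENNReal.ofReal (C / (1 + ‖x‖)) *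
          (∫⁻ y, ENNReal.ofReal (bracketWeight s y) * g y ^ 2 ∂μ) ^ (1 / 2 : ℝ) := by
  obtain ⟨A, hA⟩ := exists_lintegral_sq_one_add_norm_mul_inv_norm_sub_sq_le μ hd hs
  refine ⟨√(max A 1), by positivity, fun g hg x => ?_⟩
  have hx : 0 < 1 + ‖x‖ := by positivity
  let F : E → ℝ≥0∞ := fun y => ENNReal.ofReal ((1 + ‖x‖) * ‖x - y‖⁻¹)
  have hw : Measurable fun y : E => ENNReal.ofReal (bracketWeight s y) :=
    continuous_bracketWeight.measurable.ennreal_ofReal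
  have hF : Measurable F := by fun_prop
  have hF_norm : (∫⁻ y, ENNReal.ofReal (bracketWeight s y) * F y ^ 2 ∂μ) ^ (1 / 2 : ℝ) ≤
      ENNReal.ofReal √(max A 1) := by
    have hsq : ∀ y, ENNReal.ofReal (bracketWeight s y) * F y ^ 2 =
        ENNReal.ofReal ((1 + ‖x‖) ^ 2 * ((‖x - y‖ ^ 2)⁻¹ * bracketWeight s y)) := fun y => by
      rw [← ENNReal.ofReal_pow (by positivity), ← ENNReal.ofReal_mul (bracketWeight_nonneg y)]
      ring_nf
    rw [lintegral_congr hsq, Real.sqrt_eq_rpow, ← ENNReal.ofReal_rpow_of_nonneg (by positivity)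
      (by norm_num)]
    gcongr
    exact (hA x).trans (ENNReal.ofReal_le_ofReal (le_max_left A 1))
  have hsplit : ∀ y, ENNReal.ofReal (‖x - y‖⁻¹ * bracketWeight s y) * g y =
      ENNReal.ofReal (1 + ‖x‖)⁻¹ * (ENNReal.ofReal (bracketWeight s y) * (F y * g y)) := fun y => by
    have hw₀ := bracketWeight_nonneg (s := s) y
    rw [show ‖x - y‖⁻¹ * bracketWeight s y =
        (1 + ‖x‖)⁻¹ * (bracketWeight s y * ((1 + ‖x‖) * ‖x - y‖⁻¹)) by field_simp,
      ENNReal.ofReal_mul (by positivity), ENNReal.ofReal_mul hw₀, mul_assoc, mul_assoc]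
  calc ∫⁻ y, ENNReal.ofReal (‖x - y‖⁻¹ * bracketWeight s y) * g y ∂μ
      = ENNReal.ofReal (1 + ‖x‖)⁻¹ *
          ∫⁻ y, ENNReal.ofReal (bracketWeight s y) * (F y * g y) ∂μ := by
        rw [lintegral_congr hsplit, lintegral_const_mul' _ _ ENNReal.ofReal_ne_top]
    _ ≤ ENNReal.ofReal (1 + ‖x‖)⁻¹ * (ENNReal.ofReal √(max A 1) *
          (∫⁻ y, ENNReal.ofReal (bracketWeight s y) * g y ^ 2 ∂μ) ^ (1 / 2 : ℝ)) := by
        gcongr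
        exact (ENNReal.lintegral_mul_mul_le_weighted_L2 hw.aemeasurable hF.aemeasurable hg).trans
          (by gcongr)
    _ = _ := by
        rw [← mul_assoc, ← ENNReal.ofReal_mul (by positivity), inv_mul_eq_div]

end Kernel

lemma ofReal_norm_mul_mul_le {𝕜 : Type*} [NormedDivisionRing 𝕜] {a b z : 𝕜} {c r w : ℝ}
    (hr : 0 ≤ r) (hw : 0 ≤ w) (hc : 0 ≤ c) (ha : ‖a‖ ≤ c / r) (hb : ‖b‖ ≤ c * w) :
    ENNReal.ofReal ‖a * b * z‖ ≤ ENNReal.ofReal (c ^ 2) * (ENNReal.ofReal (r⁻¹ * w) * ‖z‖ₑ) := by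
  have hbound : ‖a * b * z‖ ≤ c / r * (c * w) * ‖z‖ := by
    rw [norm_mul, norm_mul]
    gcongr
  rw [← ofReal_norm, ← ENNReal.ofReal_mul (by positivity), ← ENNReal.ofReal_mul (by positivity)]
  exact ENNReal.ofReal_le_ofReal (hbound.trans_eq (by ring))

lemma weightedNorm_nonneg (s : ℝ) (ψ : E3 → ℂ) : 0 ≤ weightedNorm s ψ :=
  Real.rpow_nonneg (integral_nonneg fun y => by positivity) _

lemma ofReal_weightedNorm {s : ℝ} {ψ : E3 → ℂ}
    (hψ : Integrable (fun y : E3 => (1 + ‖y‖ ^ 2) ^ (-s / 2) * ‖ψ y‖ ^ 2)) :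
    ENNReal.ofReal (weightedNorm s ψ) =
      (∫⁻ y, ENNReal.ofReal (bracketWeight s y) * ‖ψ y‖ₑ ^ 2) ^ (1 / 2 : ℝ) := by
  rw [weightedNorm, ← ENNReal.ofReal_rpow_of_nonneg (integral_nonneg fun y => by positivity)
    (by norm_num), ofReal_integral_eq_lintegral_ofReal hψ (ae_of_all _ fun y => by positivity)]
  congr 1
  refine lintegral_congr fun y => ?_
  rw [ENNReal.ofReal_mul (Real.rpow_nonneg (by positivity) _), ENNReal.ofReal_pow (norm_nonneg _),
    ofReal_norm, bracketWeight]

theorem volume_potential_decay_weighted_general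
    (R s c : ℝ) (hs : 3 < s) (hc : 0 < c) :
    ∃ C : ℝ, 0 < C ∧
      ∀ (K : E3 × E3 → ℂ), Measurable K →
      (∀ x y : E3, x ≠ y → ‖K (x, y)‖ ≤ c / ‖x - y‖) →
      ∀ (f : E3 → ℂ), Measurable f →
      (∀ y : E3, ‖f y‖ ≤ c * (1 + ‖y‖ ^ 2) ^ (-s / 2)) →
      ∀ (ψ : E3 → ℂ), Measurable ψ →
      Integrable (fun y : E3 => (1 + ‖y‖ ^ 2) ^ (-s / 2) * ‖ψ y‖ ^ 2) →
      ∀ x : E3,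
        ‖∫ y in {y : E3 | R < ‖y‖}, K (x, y) * f y * ψ y‖ ≤
          C * weightedNorm s ψ / (1 + ‖x‖) := by
  obtain ⟨C, hC, hpotential⟩ := exists_lintegral_inv_norm_sub_mul_bracketWeight_mul_le
    (volume : Measure E3) (by simp) (by simpa using hs)
  refine ⟨c ^ 2 * C, by positivity, fun K _ hK f _ hf ψ hψm hψ x => ?_⟩
  have hlintegral : ∫⁻ y in {y : E3 | R < ‖y‖}, ENNReal.ofReal ‖K (x, y) * f y * ψ y‖ ≤
      ENNReal.ofReal (c ^ 2 * C * weightedNorm s ψ / (1 + ‖x‖)) :=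
    calc _ ≤ ∫⁻ y, ENNReal.ofReal ‖K (x, y) * f y * ψ y‖ := setLIntegral_le_lintegral _ _
      _ ≤ ∫⁻ y, ENNReal.ofReal (c ^ 2) *
            (ENNReal.ofReal (‖x - y‖⁻¹ * bracketWeight s y) * ‖ψ y‖ₑ) :=
          lintegral_mono_ae <| (Measure.ae_ne volume x).mono fun y hy =>
            ofReal_norm_mul_mul_le (norm_nonneg _) (bracketWeight_nonneg y) hc.le
              (hK x y hy.symm) (hf y)
      _ ≤ ENNReal.ofReal (c ^ 2) * (ENNReal.ofReal (C / (1 + ‖x‖)) *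
            ENNReal.ofReal (weightedNorm s ψ)) := by
          rw [lintegral_const_mul' _ _ ENNReal.ofReal_ne_top, ofReal_weightedNorm hψ]
          gcongr
          exact hpotential _ hψm.enorm.aemeasurable x
      _ = _ := by
          rw [← ENNReal.ofReal_mul (by positivity), ← ENNReal.ofReal_mul (by positivity)]
          ring_nf
  exact (norm_integral_le_lintegral_norm _).trans <| ENNReal.toReal_le_of_le_ofReal
    (by have := weightedNorm_nonneg s ψ; positivity) hlintegral

/-- Lemma 4.2: for a kernel `K` bounded by `c/‖x-y‖`, a density `f` decaying like
`(1+‖y‖²)^{-s/2}` with `s > 3`, and `ψ` with finite weighted norm `‖ψ‖_{0,-s}`,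
the potential `∫_{‖y‖>R} K(x,y) f(y) ψ(y) dy` is bounded by `C‖ψ‖_{0,-s}/(1+‖x‖)`,
with `C` depending only on `c`, `s`, `R`. -/
theorem volume_potential_decay_weighted
    (R s c : ℝ) (hR : 0 < R) (hs : 3 < s) (hc : 0 < c) :
    ∃ C : ℝ, 0 < C ∧
      ∀ (K : E3 × E3 → ℂ), Measurable K →
      (∀ x y : E3, x ≠ y → ‖K (x, y)‖ ≤ c / ‖x - y‖) →
      ∀ (f : E3 → ℂ), Measurable f →
      (∀ y : E3, ‖f y‖ ≤ c * (1 + ‖y‖ ^ 2) ^ (-s / 2)) →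
      ∀ (ψ : E3 → ℂ), Measurable ψ →
      Integrable (fun y : E3 => (1 + ‖y‖ ^ 2) ^ (-s / 2) * ‖ψ y‖ ^ 2) →
      ∀ x : E3,
        ‖∫ y in {y : E3 | R < ‖y‖}, K (x, y) * f y * ψ y‖ ≤
          C * weightedNorm s ψ / (1 + ‖x‖) :=
  volume_potential_decay_weighted_general R s c hs hc
end

section
/- Let R > 0 and s > 2. Then ∫_{{y : ‖y‖ > R}} (1/‖x−y‖)·(1+‖y‖²)^{−s/2} dy → 0 as ‖x‖ → ∞; that is, for every ε > 0 there exists ρ > 0 such that for all x ∈ ℝ³ with ‖x‖ ≥ ρ the integral is at most ε. (The remark following Lemma 4.1: for s > 2 the estimate of Lemma 4.1 yields o(1) as ‖x‖ → ∞ in place of the bound c/‖x‖.) -/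
open MeasureTheory

/-!
Since `(1 + ‖y‖²)^(-s/2) ≤ ‖y‖^(-t)` for `t = min s (5/2) ∈ (2, 3)`, the integral is dominated by
`J(x) = ∫ ‖x - y‖⁻¹ ‖y‖^(-t) dy` over all of `ℝ³`. In dimension `n` the potential
`∫ ‖x - y‖^(-a) ‖y‖^(-b) dy` is homogeneous of degree `n - a - b` under dilations of `x`, and when
`a, b < n < a + b` it is bounded on the unit sphere: near `0` and near `x` one factor stays bounded
and the other is locally integrable, while at infinity the product decays like
`(1 + ‖y‖)^(-(a + b))`. Hence `J(x) ≤ C ‖x‖^(2 - t) → 0`.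
-/

open Metric Module
open scoped ENNReal

theorem rpow_neg_le_mul_rpow_neg {x y c p : ℝ} (hy : 0 < y) (hc : 0 < c) (h : y ≤ c * x)
    (hp : 0 ≤ p) : x ^ (-p) ≤ c ^ p * y ^ (-p) :=
  calc x ^ (-p) ≤ (y / c) ^ (-p) :=
        Real.rpow_le_rpow_of_nonpos (div_pos hy hc) ((div_le_iff₀' hc).2 h) (neg_nonpos.2 hp)
    _ = c ^ p * y ^ (-p) := by
      rw [Real.div_rpow hy.le hc.le, Real.rpow_neg hc.le, div_inv_eq_mul, mul_comm]

section RieszProductPotential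

variable {E : Type*} [NormedAddCommGroup E] [MeasurableSpace E] (μ : Measure E)

noncomputable def rieszProductPotential (a b : ℝ) (x : E) : ℝ≥0∞ :=
  ∫⁻ y, ENNReal.ofReal (‖x - y‖ ^ (-a) * ‖y‖ ^ (-b)) ∂μ

variable [BorelSpace E] [μ.IsAddHaarMeasure]

theorem rieszProductPotential_le_of_norm_eq_one {a b : ℝ} (ha : 0 ≤ a) (hb : 0 ≤ b) {u : E}
    (hu : ‖u‖ = 1) :
    rieszProductPotential μ a b u ≤
      ∫⁻ y in ball 0 2⁻¹, ENNReal.ofReal (2 ^ a * ‖y‖ ^ (-b)) ∂μ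
      + ∫⁻ y in ball 0 2⁻¹, ENNReal.ofReal (2 ^ b * ‖y‖ ^ (-a)) ∂μ
      + ∫⁻ y, ENNReal.ofReal (5 ^ a * 3 ^ b * (1 + ‖y‖) ^ (-(a + b))) ∂μ := by
  set G₁ := (ball (0 : E) 2⁻¹).indicator fun y => ENNReal.ofReal (2 ^ a * ‖y‖ ^ (-b))
  set G₂ := (ball (0 : E) 2⁻¹).indicator fun y => ENNReal.ofReal (2 ^ b * ‖y‖ ^ (-a))
  set G₃ := fun y : E => ENNReal.ofReal (5 ^ a * 3 ^ b * (1 + ‖y‖) ^ (-(a + b)))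
  have hpt : ∀ y, ENNReal.ofReal (‖u - y‖ ^ (-a) * ‖y‖ ^ (-b)) ≤ G₁ y + G₂ (y - u) + G₃ y := by
    intro y
    have huy := norm_sub_norm_le u y
    have hyu := norm_sub_norm_le y u
    rw [norm_sub_rev y u] at hyu
    by_cases hy : ‖y‖ < 2⁻¹
    · have hG : G₁ y = ENNReal.ofReal (2 ^ a * ‖y‖ ^ (-b)) :=
        Set.indicator_of_mem (mem_ball_zero_iff.2 hy) _
      refine le_trans ?_ (le_add_right (le_add_right hG.ge))
      gcongr
      simpa using rpow_neg_le_mul_rpow_neg one_pos two_pos (by linarith) ha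
    by_cases hyu' : ‖y - u‖ < 2⁻¹
    · have hG : G₂ (y - u) = ENNReal.ofReal (2 ^ b * ‖y - u‖ ^ (-a)) :=
        Set.indicator_of_mem (mem_ball_zero_iff.2 hyu') _
      refine le_trans ?_ (le_add_right (le_add_left hG.ge))
      rw [norm_sub_rev, mul_comm]
      gcongr
      simpa using rpow_neg_le_mul_rpow_neg one_pos two_pos (by linarith) hb
    push Not at hy hyu'
    rw [norm_sub_rev] at hyu'
    refine le_trans ?_ (le_add_left le_rfl)
    have h₁ : ‖u - y‖ ^ (-a) ≤ 5 ^ a * (1 + ‖y‖) ^ (-a) :=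
      rpow_neg_le_mul_rpow_neg (by positivity) (by norm_num) (by linarith) ha
    have h₂ : ‖y‖ ^ (-b) ≤ 3 ^ b * (1 + ‖y‖) ^ (-b) :=
      rpow_neg_le_mul_rpow_neg (by positivity) (by norm_num) (by linarith) hb
    calc ENNReal.ofReal (‖u - y‖ ^ (-a) * ‖y‖ ^ (-b))
        ≤ ENNReal.ofReal (5 ^ a * (1 + ‖y‖) ^ (-a) * (3 ^ b * (1 + ‖y‖) ^ (-b))) := by gcongr
      _ = G₃ y := by
        simp only [G₃, neg_add, Real.rpow_add (by positivity : (0 : ℝ) < 1 + ‖y‖)]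
        ring_nf
  have hG₁ : Measurable G₁ := (Measurable.ennreal_ofReal (by fun_prop)).indicator measurableSet_ball
  have hG₃ : Measurable G₃ := by fun_prop
  calc rieszProductPotential μ a b u ≤ ∫⁻ y, G₁ y + G₂ (y - u) + G₃ y ∂μ := lintegral_mono hpt
    _ = _ := by
      rw [lintegral_add_right _ hG₃, lintegral_add_left hG₁, lintegral_sub_right_eq_self,
        lintegral_indicator measurableSet_ball, lintegral_indicator measurableSet_ball]

variable [NormedSpace ℝ E] [FiniteDimensional ℝ E]

theorem lintegral_eq_mul_lintegral_comp_smul (f : E → ℝ≥0∞) {t : ℝ} (ht : 0 < t) :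
    ∫⁻ y, f y ∂μ = ENNReal.ofReal (t ^ finrank ℝ E) * ∫⁻ y, f (t • y) ∂μ := by
  let e := (Homeomorph.smulOfNeZero (α := E) t ht.ne').toMeasurableEquiv
  have htn : 0 < t ^ finrank ℝ E := by positivity
  rw [show ∫⁻ y, f (t • y) ∂μ = ∫⁻ y, f (e y) ∂μ from rfl, ← lintegral_map_equiv f e,
    show ⇑e = (t • ·) from rfl, Measure.map_addHaar_smul μ ht.ne', lintegral_smul_measure,
    abs_of_pos (inv_pos.2 htn), smul_eq_mul, ← mul_assoc, ← ENNReal.ofReal_mul htn.le,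
    mul_inv_cancel₀ htn.ne', ENNReal.ofReal_one, one_mul]

theorem rieszProductPotential_smul (a b : ℝ) {t : ℝ} (ht : 0 < t) (x : E) :
    rieszProductPotential μ a b (t • x) =
      ENNReal.ofReal (t ^ ((finrank ℝ E : ℝ) - a - b)) * rieszProductPotential μ a b x := by
  have hscale : ∀ y : E, ‖t • x - t • y‖ ^ (-a) * ‖t • y‖ ^ (-b) =
      t ^ (-a - b) * (‖x - y‖ ^ (-a) * ‖y‖ ^ (-b)) := by
    intro y
    rw [← smul_sub, norm_smul, norm_smul, Real.norm_of_nonneg ht.le,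
      Real.mul_rpow ht.le (norm_nonneg _), Real.mul_rpow ht.le (norm_nonneg _),
      sub_eq_add_neg (-a), Real.rpow_add ht]
    ring
  rw [rieszProductPotential, lintegral_eq_mul_lintegral_comp_smul μ _ ht]
  simp only [hscale, ENNReal.ofReal_mul (Real.rpow_nonneg ht.le _)]
  rw [lintegral_const_mul' _ _ ENNReal.ofReal_ne_top, ← mul_assoc,
    ← ENNReal.ofReal_mul (by positivity), ← Real.rpow_natCast, ← Real.rpow_add ht,
    rieszProductPotential]
  ring_nf

theorem exists_rieszProductPotential_le {a b : ℝ} (ha : 0 ≤ a) (hb : 0 ≤ b)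
    (haE : a < finrank ℝ E) (hbE : b < finrank ℝ E) (habE : finrank ℝ E < a + b) :
    ∃ C : ℝ≥0∞, C ≠ ∞ ∧ ∀ x : E, x ≠ 0 →
      rieszProductPotential μ a b x ≤ ENNReal.ofReal (‖x‖ ^ ((finrank ℝ E : ℝ) - a - b)) * C := by
  have hd : 1 ≤ finrank ℝ E := by exact_mod_cast (ha.trans_lt haE)
  have hball : ∀ c p : ℝ, p < finrank ℝ E →
      ∫⁻ y in ball (0 : E) 2⁻¹, ENNReal.ofReal (c * ‖y‖ ^ (-p)) ∂μ ≠ ∞ := by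
    intro c p hp
    have hi : IntegrableOn (fun y : E => ‖y‖ ^ (-p)) (ball 0 2⁻¹) μ :=
      integrableOn_ball_of_norm_le_rpow (C := 1) hd hp
        (ae_of_all _ fun y => by simp [abs_of_nonneg (Real.rpow_nonneg (norm_nonneg y) _)])
        (measurable_norm.pow_const _).aestronglyMeasurable
    exact (hi.const_mul c).lintegral_lt_top.ne
  obtain ⟨C, hC, hCu⟩ : ∃ C : ℝ≥0∞, C ≠ ∞ ∧
      ∀ u : E, ‖u‖ = 1 → rieszProductPotential μ a b u ≤ C := by
    refine ⟨_, ?_, fun u hu => rieszProductPotential_le_of_norm_eq_one μ ha hb hu⟩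
    exact ENNReal.add_ne_top.2 ⟨ENNReal.add_ne_top.2 ⟨hball _ b hbE, hball _ a haE⟩,
      ((integrable_one_add_norm habE).const_mul _).lintegral_lt_top.ne⟩
  refine ⟨C, hC, fun x hx => ?_⟩
  have hx0 : 0 < ‖x‖ := norm_pos_iff.2 hx
  have hunit : ‖‖x‖⁻¹ • x‖ = 1 := by rw [norm_smul, norm_inv, norm_norm, inv_mul_cancel₀ hx0.ne']
  have hscale := rieszProductPotential_smul μ a b hx0 (‖x‖⁻¹ • x)
  rw [smul_inv_smul₀ hx0.ne'] at hscale
  exact hscale ▸ mul_le_mul_right (hCu _ hunit) _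

end RieszProductPotential

theorem one_add_sq_rpow_neg_le {r s t : ℝ} (hr : 0 < r) (ht : 0 ≤ t) (hts : t ≤ s) :
    (1 + r ^ 2) ^ (-s / 2) ≤ r ^ (-t) :=
  calc (1 + r ^ 2) ^ (-s / 2)
      ≤ (1 + r ^ 2) ^ (-t / 2) := Real.rpow_le_rpow_of_exponent_le (by nlinarith) (by linarith)
    _ ≤ (r ^ 2) ^ (-t / 2) := Real.rpow_le_rpow_of_nonpos (by positivity) (by linarith) (by linarith)
    _ = r ^ (-t) := by
      rw [← Real.rpow_natCast, ← Real.rpow_mul hr.le]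
      congr 1
      ring

theorem setIntegral_le_toReal_lintegral {α : Type*} [MeasurableSpace α] {μ : Measure α}
    {s : Set α} {f : α → ℝ} {g : α → ℝ≥0∞} (hf : 0 ≤ f)
    (hfm : AEStronglyMeasurable f (μ.restrict s)) (hg : ∫⁻ x, g x ∂μ ≠ ∞)
    (hfg : ∀ᵐ x ∂μ, ENNReal.ofReal (f x) ≤ g x) :
    ∫ x in s, f x ∂μ ≤ (∫⁻ x, g x ∂μ).toReal := by
  rw [integral_eq_lintegral_of_nonneg_ae (ae_of_all _ hf) hfm]
  exact ENNReal.toReal_mono hg ((setLIntegral_le_lintegral _ _).trans (lintegral_mono_ae hfg))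

theorem exists_volume_potential_le_norm_rpow (R : ℝ) {s t : ℝ} (ht2 : 2 < t) (ht3 : t < 3)
    (hts : t ≤ s) :
    ∃ C : ℝ, ∀ x : E3, x ≠ 0 →
      (∫ y in {y : E3 | R < ‖y‖}, (1 / ‖x - y‖) * (1 + ‖y‖ ^ 2) ^ (-s / 2))
        ≤ ‖x‖ ^ (-(t - 2)) * C := by
  have hE : (finrank ℝ E3 : ℝ) = 3 := by simp
  obtain ⟨C, hC, hJ⟩ := exists_rieszProductPotential_le (volume : Measure E3) (b := t) zero_le_one
    (by linarith) (by rw [hE]; norm_num) (by rw [hE]; exact ht3) (by rw [hE]; linarith)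
  rw [hE, show (3 : ℝ) - 1 - t = -(t - 2) by ring] at hJ
  refine ⟨C.toReal, fun x hx => ?_⟩
  have hJx : rieszProductPotential volume 1 t x ≠ ∞ :=
    ne_top_of_le_ne_top (ENNReal.mul_ne_top ENNReal.ofReal_ne_top hC) (hJ x hx)
  calc (∫ y in {y : E3 | R < ‖y‖}, (1 / ‖x - y‖) * (1 + ‖y‖ ^ 2) ^ (-s / 2))
      ≤ (rieszProductPotential volume 1 t x).toReal := by
        refine setIntegral_le_toReal_lintegral (fun y => by positivity) (by fun_prop) hJx ?_
        -- the real power `‖0‖ ^ (-t)` is `0`, so the comparison only holds away from `y = 0`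
        filter_upwards [Measure.ae_ne volume 0] with y hy
        rw [Real.rpow_neg_one, ← one_div]
        gcongr
        exact one_add_sq_rpow_neg_le (norm_pos_iff.2 hy) (by linarith) hts
    _ ≤ (ENNReal.ofReal (‖x‖ ^ (-(t - 2))) * C).toReal :=
        ENNReal.toReal_mono (ENNReal.mul_ne_top ENNReal.ofReal_ne_top hC) (hJ x hx)
    _ = ‖x‖ ^ (-(t - 2)) * C.toReal := by
        rw [ENNReal.toReal_mul, ENNReal.toReal_ofReal (by positivity)]

theorem volume_potential_little_o_general
    (R s : ℝ) (hs : 2 < s) :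
    ∀ ε : ℝ, 0 < ε → ∃ ρ : ℝ, 0 < ρ ∧ ∀ x : E3, ρ ≤ ‖x‖ →
      (∫ y in {y : E3 | R < ‖y‖}, (1 / ‖x - y‖) * (1 + ‖y‖ ^ 2) ^ (-s / 2)) ≤ ε := by
  intro ε hε
  set t : ℝ := min s (5 / 2)
  have ht2 : 2 < t := lt_min hs (by norm_num)
  obtain ⟨C, hC⟩ := exists_volume_potential_le_norm_rpow R ht2
    ((min_le_right _ _).trans_lt (by norm_num)) (min_le_left _ _)
  obtain ⟨ρ, hρ⟩ := Filter.eventually_atTop.1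
    (((tendsto_rpow_neg_atTop (by linarith : 0 < t - 2)).mul_const C).eventually_lt_const
      (by simpa using hε))
  refine ⟨max ρ 1, by positivity, fun x hx => ?_⟩
  have hx0 : x ≠ 0 := norm_pos_iff.1 (one_pos.trans_le ((le_max_right _ _).trans hx))
  exact (hC x hx0).trans (hρ _ ((le_max_left _ _).trans hx)).le

/-- Remark after Lemma 4.1: for `s > 2`, `∫_{‖y‖>R} ‖x-y‖⁻¹ (1+‖y‖²)^{-s/2} dy = o(1)`
as `‖x‖ → ∞`. -/
theorem volume_potential_little_o
    (R s : ℝ) (hR : 0 < R) (hs : 2 < s) :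
    ∀ ε : ℝ, 0 < ε → ∃ ρ : ℝ, 0 < ρ ∧ ∀ x : E3, ρ ≤ ‖x‖ →
      (∫ y in {y : E3 | R < ‖y‖}, (1 / ‖x - y‖) * (1 + ‖y‖ ^ 2) ^ (-s / 2)) ≤ ε :=
  volume_potential_little_o_general R s hs
end
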